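/- Let t₁ : ℝ → ℝ assign to each a the unique real solution t of t = cosh(t + a)·e^{-(t+a)}, and set t₂(a) := t₁(-a). Then t₁ is strictly decreasing on ℝ and t₂ is strictly increasing on ℝ; moreover t₂(a) is the unique real solution t of t = cosh(t - a)·e^{-(t-a)}. -/

import Mathlib

lemma cosh_mul_exp_neg (x : ℝ) :
    Real.cosh x * Real.exp (-x) = (1 + Real.exp (-(2*x))) / 2 := by
  rw [Real.cosh_eq]
  have h1 : Real.exp x * Real.exp (-x) = 1 := by
    rw [← Real.exp_add]; simp
  have h2 : Real.exp (-x) * Real.exp (-x) = Real.exp (-(2*x)) := by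
    rw [← Real.exp_add]; ring_nf
  field_simp
  rw [mul_comm x 2]
  nlinarith [h1, h2]

/-- `t₁ a` is the unique solution of `t = cosh (t + a) * exp (-(t + a))`;
`t₂ a := t₁ (-a)`. Then `t₁` is strictly decreasing, `t₂` is strictly increasing,
and `t₂ a` is the unique solution of `t = cosh (t - a) * exp (-(t - a))`. -/
theorem stmt1 (t₁ : ℝ → ℝ)
    (h : ∀ a t : ℝ, t = Real.cosh (t + a) * Real.exp (-(t + a)) ↔ t = t₁ a) :
    StrictAnti t₁ ∧ StrictMono (fun a => t₁ (-a)) ∧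
    (∀ a t : ℝ, t = Real.cosh (t - a) * Real.exp (-(t - a)) ↔ t = t₁ (-a)) := by
  have hfix : ∀ a, t₁ a = (1 + Real.exp (-(2*(t₁ a + a)))) / 2 := by
    intro a
    have := (h a (t₁ a)).mpr rfl
    rwa [cosh_mul_exp_neg] at this
  have hanti : StrictAnti t₁ := by
    intro a b hab
    by_contra hle
    push_neg at hle
    have hlt : t₁ a + a < t₁ b + b := by linarith
    have := Real.exp_strictMono (by linarith : -(2*(t₁ b + b)) < -(2*(t₁ a + a)))
    have ha := hfix a
    have hb := hfix b
    linarith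
  refine ⟨hanti, ?_, ?_⟩
  · intro a b hab
    exact hanti (neg_lt_neg hab)
  · intro a t
    rw [sub_eq_add_neg]
    exact h (-a) t
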